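/- Let Ω ⊂ ℝ^d be a nonempty compact set, let G : M^+(Ω) × Ω → ℝ^{d'} be continuous (with the extended 1-Wasserstein metric on M^+(Ω)), and define f_G(μ) := G(μ,·)_# μ. Fix μ ∈ M^+(Ω), x ∈ Ω, and ψ ∈ C¹_0(ℝ^{d'}) that is constant in an open neighborhood of supp(f_G(μ)). Then there exists ε₀ > 0 such that for all ε ∈ (0, ε₀), ⟨ψ, f_G(μ + εδ_x)⟩ = ∫ ψ(G(μ, y)) dμ(y) + ε·ψ(G(μ + εδ_x, x)); consequently lim_{ε→0+} (⟨ψ, f_G(μ + εδ_x)⟩ − ⟨ψ, f_G(μ)⟩)/ε = ψ(G(μ, x)). -/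

import Mathlib

/-! For small `ε > 0` the measure `μ + εδₓ` is `W1ext`-close to `μ`, so continuity of `G` together
with compactness of `Ω` makes `G(μ + εδₓ, ·)` uniformly close to `G(μ, ·)` on `Ω`. The support of
`f_G(μ)` is compact, so a fixed thickening of it lies in the open set where `ψ` is constant; hence
`ψ(G(μ + εδₓ, y)) = ψ(G(μ, y))` for `μ`-a.e. `y`, and only the atom at `x` contributes, giving the
extra term `ε ψ(G(μ + εδₓ, x))`. Dividing by `ε`, the limit is `ψ(G(μ, x))` by continuity of `G`. -/

open MeasureTheory Filter Set

/-- The 1-Wasserstein distance, via Kantorovich–Rubinstein duality. -/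
noncomputable def W1 {E : Type*} [MeasurableSpace E] [PseudoMetricSpace E]
    (μ ν : Measure E) : ℝ :=
  ⨆ φ : {φ : E → ℝ // LipschitzWith 1 φ}, ((∫ x, φ.1 x ∂μ) - ∫ x, φ.1 x ∂ν)

/-- The extension of the 1-Wasserstein distance to positive finite measures. -/
noncomputable def W1ext {E : Type*} [MeasurableSpace E] [PseudoMetricSpace E]
    (μ ν : Measure E) : ℝ :=
  W1 ((μ Set.univ)⁻¹ • μ) ((ν Set.univ)⁻¹ • ν)
    + |(μ Set.univ).toReal - (ν Set.univ).toReal|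

/-- `M⁺(Ω)`: the strictly positive finite Borel measures supported in `Ω`. -/
def Mplus {E : Type*} [MeasurableSpace E] (Ω : Set E) : Set (Measure E) :=
  {μ | μ Set.univ ≠ 0 ∧ μ Set.univ ≠ ⊤ ∧ μ Ωᶜ = 0}

/-- The support of a measure: points all of whose neighborhoods have positive measure. -/
def msupport {F : Type*} [TopologicalSpace F] [MeasurableSpace F] (μ : Measure F) : Set F :=
  {y | ∀ U ∈ nhds y, μ U ≠ 0}

/-- `C¹₀`: continuously differentiable functions with compact support. -/
def IsC1c {F : Type*} [NormedAddCommGroup F] [NormedSpace ℝ F] (ψ : F → ℝ) : Prop :=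
  ContDiff ℝ 1 ψ ∧ HasCompactSupport ψ

/-- Joint continuity of an in-context map `G : M⁺(Ω) × Ω → ℝ^{d'}`. -/
def W1ContinuousIC {E F : Type*} [MeasurableSpace E] [PseudoMetricSpace E] [PseudoMetricSpace F]
    (Ω : Set E) (G : Measure E → E → F) : Prop :=
  ∀ μ ∈ Mplus Ω, ∀ x ∈ Ω, ∀ ε > (0 : ℝ), ∃ δ > (0 : ℝ), ∀ ν ∈ Mplus Ω, ∀ y ∈ Ω,
    W1ext μ ν + dist x y < δ → dist (G μ x) (G ν y) < ε

open Metric Topology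

section Support

variable {F : Type*} [TopologicalSpace F] [MeasurableSpace F]

lemma isClosed_msupport (ν : Measure F) : IsClosed (msupport ν) := by
  refine isOpen_compl_iff.1 (isOpen_iff_mem_nhds.2 fun z hz => ?_)
  obtain ⟨V, hV, hV0⟩ : ∃ V ∈ 𝓝 z, ν V = 0 := by simpa [msupport] using hz
  filter_upwards [interior_mem_nhds.2 hV] with w hw hwS
  exact hwS _ (isOpen_interior.mem_nhds hw) (measure_mono_null interior_subset hV0)

lemma msupport_subset_of_measure_compl_eq_zero {ν : Measure F} {s : Set F} (hs : IsClosed s)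
    (h : ν sᶜ = 0) : msupport ν ⊆ s :=
  fun _ hz => by_contra fun hzs => hz _ (hs.isOpen_compl.mem_nhds hzs) h

lemma measure_compl_msupport [SecondCountableTopology F] (ν : Measure F) :
    ν (msupport ν)ᶜ = 0 := by
  obtain ⟨B, hBc, -, hB⟩ := TopologicalSpace.exists_countable_basis F
  have hsub : (msupport ν)ᶜ ⊆ ⋃ b ∈ {b ∈ B | ν b = 0}, b := by
    intro y hy
    obtain ⟨V, hV, hV0⟩ : ∃ V ∈ 𝓝 y, ν V = 0 := by simpa [msupport] using hy
    obtain ⟨b, hbB, hyb, hbV⟩ := hB.mem_nhds_iff.1 hV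
    exact mem_biUnion ⟨hbB, measure_mono_null hbV hV0⟩ hyb
  exact measure_mono_null hsub
    ((measure_biUnion_null_iff (hBc.mono (sep_subset _ _))).2 fun _ hb => hb.2)

end Support

lemma ContinuousOn.aemeasurable_of_measure_compl_eq_zero {E F : Type*} [TopologicalSpace E]
    [MeasurableSpace E] [OpensMeasurableSpace E] [TopologicalSpace F] [MeasurableSpace F]
    [BorelSpace F] {μ : Measure E} {Ω : Set E} {g : E → F} (hg : ContinuousOn g Ω)
    (hΩ : MeasurableSet Ω) (hμ : μ Ωᶜ = 0) : AEMeasurable g μ := by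
  simpa [Measure.restrict_eq_self_of_ae_mem (ae_iff.2 hμ)] using hg.aemeasurable hΩ (μ := μ)

lemma ae_mem_msupport_map {E F : Type*} [MeasurableSpace E] [TopologicalSpace F]
    [SecondCountableTopology F] [MeasurableSpace F] [OpensMeasurableSpace F] {μ : Measure E}
    {g : E → F} (hg : AEMeasurable g μ) : ∀ᵐ y ∂μ, g y ∈ msupport (μ.map g) := by
  change μ (g ⁻¹' (msupport (μ.map g))ᶜ) = 0
  rw [← Measure.map_apply_of_aemeasurable hg (isClosed_msupport _).measurableSet.compl]
  exact measure_compl_msupport _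

section PushForward

variable {E F : Type*} [TopologicalSpace E] [T2Space E] [MeasurableSpace E]
  [OpensMeasurableSpace E] [MetricSpace F] [MeasurableSpace F] [BorelSpace F]
  {μ : Measure E} {Ω : Set E} {g : E → F}

lemma isCompact_msupport_map (hΩ : IsCompact Ω) (hg : ContinuousOn g Ω) (hμ : μ Ωᶜ = 0) :
    IsCompact (msupport (μ.map g)) := by
  have hK : IsCompact (g '' Ω) := hΩ.image_of_continuousOn hg
  refine hK.of_isClosed_subset (isClosed_msupport _)
    (msupport_subset_of_measure_compl_eq_zero hK.isClosed ?_)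
  rw [Measure.map_apply_of_aemeasurable
    (hg.aemeasurable_of_measure_compl_eq_zero hΩ.measurableSet hμ) hK.isClosed.measurableSet.compl]
  exact measure_mono_null (fun y hy hyΩ => hy (mem_image_of_mem g hyΩ)) hμ

lemma exists_ae_ball_subset_of_msupport_map_subset [SecondCountableTopology F]
    (hΩ : IsCompact Ω) (hg : ContinuousOn g Ω) (hμ : μ Ωᶜ = 0) {U : Set F} (hU : IsOpen U)
    (hSU : msupport (μ.map g) ⊆ U) :
    ∃ ρ > 0, ∀ᵐ y ∂μ, ball (g y) ρ ⊆ U := by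
  obtain ⟨ρ, hρ, hthick⟩ := (isCompact_msupport_map hΩ hg hμ).exists_thickening_subset_open hU hSU
  have hgm : AEMeasurable g μ := hg.aemeasurable_of_measure_compl_eq_zero hΩ.measurableSet hμ
  refine ⟨ρ, hρ, ?_⟩
  filter_upwards [ae_mem_msupport_map hgm] with y hy z hz
  exact hthick (mem_thickening_iff.2 ⟨g y, hy, mem_ball.1 hz⟩)

end PushForward

lemma inv_mul_sub_inv_mul_add_le {m ε D I a : ℝ} (hm : 0 < m) (hε : 0 ≤ ε) (hD : 0 ≤ D)
    (hI : I ≤ (a + D) * m) : m⁻¹ * I - (m + ε)⁻¹ * (I + ε * a) ≤ ε * (D / m) := by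
  have hmε : 0 < m + ε := by linarith
  rw [show m⁻¹ * I - (m + ε)⁻¹ * (I + ε * a) = ε * (I - m * a) / (m * (m + ε)) by
    field_simp; ring, div_le_iff₀ (by positivity)]
  calc ε * (I - m * a) ≤ ε * (D * m) := mul_le_mul_of_nonneg_left (by linarith) hε
    _ ≤ ε * (D * (m + ε)) := by gcongr; linarith
    _ = ε * (D / m) * (m * (m + ε)) := by field_simp

lemma add_smul_dirac_mem_Mplus {E : Type*} [MeasurableSpace E] [MeasurableSingletonClass E]
    {Ω : Set E} {μ : Measure E} {x : E} (hμ : μ ∈ Mplus Ω) (hx : x ∈ Ω)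
    {c : ENNReal} (hc : c ≠ ⊤) : μ + c • Measure.dirac x ∈ Mplus Ω := by
  obtain ⟨hμ0, hμtop, hμΩ⟩ := hμ
  refine ⟨?_, ?_, ?_⟩ <;> simp [hμ0, hμtop, hc, hμΩ, hx]

section Wasserstein

variable {E : Type*} [MeasurableSpace E] [PseudoMetricSpace E]

lemma W1_nonneg (μ ν : Measure E) : 0 ≤ W1 μ ν := by
  by_cases h : BddAbove (range fun φ : {φ : E → ℝ // LipschitzWith 1 φ} =>
    (∫ x, φ.1 x ∂μ) - ∫ x, φ.1 x ∂ν)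
  · simpa [W1] using le_ciSup h ⟨fun _ => 0, LipschitzWith.const' 0⟩
  · rw [W1, Real.iSup_of_not_bddAbove h]

lemma W1ext_nonneg (μ ν : Measure E) : 0 ≤ W1ext μ ν :=
  add_nonneg (W1_nonneg _ _) (abs_nonneg _)

lemma W1ext_self (μ : Measure E) : W1ext μ μ = 0 := by
  simp [W1ext, W1]

variable [OpensMeasurableSpace E] {Ω : Set E} {μ : Measure E} {x : E}

lemma integrable_and_integral_le_of_lipschitzWith_one (hΩ : Bornology.IsBounded Ω)
    (hμΩ : μ Ωᶜ = 0) [IsFiniteMeasure μ] (hx : x ∈ Ω) {φ : E → ℝ} (hφ : LipschitzWith 1 φ) :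
    Integrable φ μ ∧ ∫ y, φ y ∂μ ≤ (φ x + diam Ω) * μ.real univ := by
  have hclose : ∀ᵐ y ∂μ, |φ y - φ x| ≤ diam Ω := by
    filter_upwards [ae_iff.2 hμΩ] with y hy
    simpa [← Real.dist_eq] using
      (hφ.dist_le_mul y x).trans (by simpa using dist_le_diam_of_mem hΩ hy hx)
  have hint : Integrable φ μ := by
    refine Integrable.of_bound hφ.continuous.aestronglyMeasurable (|φ x| + diam Ω) ?_
    filter_upwards [hclose] with y hy
    rw [Real.norm_eq_abs]
    linarith [abs_sub_abs_le_abs_sub (φ y) (φ x)]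
  refine ⟨hint, ?_⟩
  simpa [mul_comm] using integral_mono_ae hint (integrable_const (φ x + diam Ω))
    (by filter_upwards [hclose] with y hy; linarith [(abs_le.1 hy).2])

lemma W1ext_add_smul_dirac_le [MeasurableSingletonClass E] (hΩ : Bornology.IsBounded Ω)
    (hμ : μ ∈ Mplus Ω) (hx : x ∈ Ω) {ε : ℝ} (hε : 0 ≤ ε) :
    W1ext μ (μ + ENNReal.ofReal ε • Measure.dirac x) ≤ ε * (diam Ω / μ.real univ + 1) := by
  obtain ⟨hμ0, hμtop, hμΩ⟩ := hμ
  have : IsFiniteMeasure μ := ⟨hμtop.lt_top⟩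
  have hm : 0 < μ.real univ := ENNReal.toReal_pos hμ0 hμtop
  have hmass : (μ + ENNReal.ofReal ε • Measure.dirac x) univ = μ univ + ENNReal.ofReal ε := by
    simp
  have hW1 : W1 ((μ univ)⁻¹ • μ)
      ((μ univ + ENNReal.ofReal ε)⁻¹ • (μ + ENNReal.ofReal ε • Measure.dirac x))
      ≤ ε * (diam Ω / μ.real univ) := by
    refine Real.iSup_le (fun ⟨φ, hφ⟩ => ?_) (by positivity)
    obtain ⟨hint, hI⟩ := integrable_and_integral_le_of_lipschitzWith_one hΩ hμΩ hx hφ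
    have hintδ : Integrable φ (ENNReal.ofReal ε • Measure.dirac x) :=
      (integrable_dirac (by simp)).smul_measure ENNReal.ofReal_ne_top
    simp only [integral_smul_measure, integral_add_measure hint hintδ, integral_dirac,
      ENNReal.toReal_inv, ENNReal.toReal_add hμtop ENNReal.ofReal_ne_top,
      ENNReal.toReal_ofReal hε, smul_eq_mul]
    exact inv_mul_sub_inv_mul_add_le hm hε diam_nonneg hI
  rw [W1ext, hmass, ENNReal.toReal_add hμtop ENNReal.ofReal_ne_top, ENNReal.toReal_ofReal hε]
  simp only [sub_add_cancel_left, abs_neg, abs_of_nonneg hε]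
  linarith

lemma tendsto_W1ext_add_smul_dirac [MeasurableSingletonClass E] (hΩ : Bornology.IsBounded Ω)
    (hμ : μ ∈ Mplus Ω) (hx : x ∈ Ω) :
    Tendsto (fun ε : ℝ => W1ext μ (μ + ENNReal.ofReal ε • Measure.dirac x)) (𝓝[>] 0) (𝓝 0) := by
  have hlin : Tendsto (fun ε : ℝ => ε * (diam Ω / μ.real univ + 1)) (𝓝[>] 0) (𝓝 0) := by
    simpa using ((continuous_mul_const _).tendsto' 0 0 (zero_mul _)).mono_left nhdsWithin_le_nhds
  refine tendsto_of_tendsto_of_tendsto_of_le_of_le' tendsto_const_nhds hlin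
    (Eventually.of_forall fun _ => W1ext_nonneg _ _) ?_
  filter_upwards [self_mem_nhdsWithin] with ε hε
  exact W1ext_add_smul_dirac_le hΩ hμ hx (le_of_lt hε)

end Wasserstein

namespace W1ContinuousIC

variable {E F : Type*} [MeasurableSpace E] [PseudoMetricSpace E] [PseudoMetricSpace F]
  {Ω : Set E} {G : Measure E → E → F} {μ : Measure E}

lemma continuousOn (hG : W1ContinuousIC Ω G) (hμ : μ ∈ Mplus Ω) : ContinuousOn (G μ) Ω := by
  refine Metric.continuousOn_iff.2 fun y hy η hη => ?_
  obtain ⟨δ, hδ, hclose⟩ := hG μ hμ y hy η hη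
  refine ⟨δ, hδ, fun z hz hzy => dist_comm (G μ y) (G μ z) ▸ hclose μ hμ z hz ?_⟩
  rwa [W1ext_self, zero_add, dist_comm]

lemma tendstoUniformlyOn {ι : Type*} {l : Filter ι} (hG : W1ContinuousIC Ω G) (hΩ : IsCompact Ω)
    (hμ : μ ∈ Mplus Ω) {ν : ι → Measure E} (hν : ∀ᶠ i in l, ν i ∈ Mplus Ω)
    (hW : Tendsto (fun i => W1ext μ (ν i)) l (𝓝 0)) :
    TendstoUniformlyOn (fun i => G (ν i)) (G μ) l Ω := by
  refine (tendstoLocallyUniformlyOn_iff_tendstoUniformlyOn_of_compact hΩ).1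
    (Metric.tendstoLocallyUniformlyOn_iff.2 fun η hη z hz => ?_)
  obtain ⟨δ, hδ, hclose⟩ := hG μ hμ z hz (η / 2) (half_pos hη)
  refine ⟨Ω ∩ ball z (δ / 2), inter_mem_nhdsWithin _ (ball_mem_nhds z (half_pos hδ)), ?_⟩
  filter_upwards [hν, (tendsto_order.1 hW).2 _ (half_pos hδ)] with i hνi hWi y ⟨hy, hyz⟩
  have hzy : dist z y < δ / 2 := mem_ball'.1 hyz
  calc dist (G μ y) (G (ν i) y) ≤ dist (G μ z) (G μ y) + dist (G μ z) (G (ν i) y) :=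
        dist_triangle_left _ _ _
    _ < η / 2 + η / 2 := add_lt_add
        (hclose μ hμ y hy (by rw [W1ext_self]; linarith))
        (hclose (ν i) hνi y hy (by linarith))
    _ = η := add_halves η

end W1ContinuousIC

lemma integral_map_add_smul_dirac {E F : Type*} [MeasurableSpace E] [MeasurableSingletonClass E]
    [TopologicalSpace F] [MeasurableSpace F] [OpensMeasurableSpace F] {μ : Measure E}
    [IsFiniteMeasure μ] {x : E} {ε : ℝ} (hε : 0 ≤ ε) {g : E → F}
    (hg : AEMeasurable g (μ + ENNReal.ofReal ε • Measure.dirac x)) {ψ : F → ℝ}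
    (hψ : Continuous ψ) {C : ℝ} (hψC : ∀ z, ‖ψ z‖ ≤ C) :
    ∫ z, ψ z ∂(μ + ENNReal.ofReal ε • Measure.dirac x).map g
      = ∫ y, ψ (g y) ∂μ + ε * ψ (g x) := by
  have hgμ : AEMeasurable g μ := hg.mono_measure (Measure.le_add_right le_rfl)
  have hint : Integrable (fun y => ψ (g y)) μ :=
    .of_bound (hψ.measurable.comp_aemeasurable hgμ).aestronglyMeasurable C
      (Eventually.of_forall fun y => hψC (g y))
  have hintδ : Integrable (fun y => ψ (g y)) (ENNReal.ofReal ε • Measure.dirac x) :=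
    (integrable_dirac (by simp)).smul_measure ENNReal.ofReal_ne_top
  rw [integral_map hg hψ.aestronglyMeasurable, integral_add_measure hint hintδ,
    integral_smul_measure, integral_dirac, ENNReal.toReal_ofReal hε, smul_eq_mul]

theorem inContext_derivative_computation {d d' : ℕ}
    (Ω : Set (EuclideanSpace ℝ (Fin d))) (hΩcpt : IsCompact Ω)
    (G : Measure (EuclideanSpace ℝ (Fin d)) → EuclideanSpace ℝ (Fin d) →
      EuclideanSpace ℝ (Fin d'))
    (hG : W1ContinuousIC Ω G)
    (μ : Measure (EuclideanSpace ℝ (Fin d))) (hμ : μ ∈ Mplus Ω)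
    (x : EuclideanSpace ℝ (Fin d)) (hx : x ∈ Ω)
    (ψ : EuclideanSpace ℝ (Fin d') → ℝ) (hψ : IsC1c ψ)
    (hconst : ∃ U : Set (EuclideanSpace ℝ (Fin d')), IsOpen U ∧
      msupport (Measure.map (G μ) μ) ⊆ U ∧
      ∃ cst : ℝ, Set.EqOn ψ (fun _ => cst) U) :
    ∃ ε₀ > (0 : ℝ),
      (∀ ε ∈ Set.Ioo (0 : ℝ) ε₀,
        (∫ y, ψ y ∂ (Measure.map (G (μ + ENNReal.ofReal ε • Measure.dirac x))
            (μ + ENNReal.ofReal ε • Measure.dirac x)))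
          = (∫ y, ψ (G μ y) ∂μ)
            + ε * ψ (G (μ + ENNReal.ofReal ε • Measure.dirac x) x)) ∧
      Filter.Tendsto
        (fun ε : ℝ =>
          ((∫ y, ψ y ∂ (Measure.map (G (μ + ENNReal.ofReal ε • Measure.dirac x))
              (μ + ENNReal.ofReal ε • Measure.dirac x)))
            - ∫ y, ψ y ∂ (Measure.map (G μ) μ)) / ε)
        (nhdsWithin 0 (Set.Ioi 0)) (nhds (ψ (G μ x))) := by
  obtain ⟨U, hU, hSU, c, hψU⟩ := hconst
  have : IsFiniteMeasure μ := ⟨hμ.2.1.lt_top⟩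
  have hψc : Continuous ψ := hψ.1.continuous
  obtain ⟨C, hψC⟩ := hψ.2.exists_bound_of_continuous hψc
  have hmeas : ∀ ν ∈ Mplus Ω, AEMeasurable (G ν) ν := fun ν hν =>
    (hG.continuousOn hν).aemeasurable_of_measure_compl_eq_zero hΩcpt.measurableSet hν.2.2
  have hν : ∀ ε : ℝ, μ + ENNReal.ofReal ε • Measure.dirac x ∈ Mplus Ω := fun ε =>
    add_smul_dirac_mem_Mplus hμ hx ENNReal.ofReal_ne_top
  have hunif : TendstoUniformlyOn (fun ε : ℝ => G (μ + ENNReal.ofReal ε • Measure.dirac x))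
      (G μ) (𝓝[>] 0) Ω :=
    hG.tendstoUniformlyOn hΩcpt hμ (Eventually.of_forall hν)
      (tendsto_W1ext_add_smul_dirac hΩcpt.isBounded hμ hx)
  obtain ⟨ρ, hρ, hball⟩ :=
    exists_ae_ball_subset_of_msupport_map_subset hΩcpt (hG.continuousOn hμ) hμ.2.2 hU hSU
  obtain ⟨ε₀, hε₀, hclose⟩ :=
    mem_nhdsGT_iff_exists_Ioo_subset.1 (Metric.tendstoUniformlyOn_iff.1 hunif ρ hρ)
  have key : ∀ ε ∈ Ioo (0 : ℝ) ε₀,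
      ∫ y, ψ y ∂(μ + ENNReal.ofReal ε • Measure.dirac x).map
          (G (μ + ENNReal.ofReal ε • Measure.dirac x))
        = ∫ y, ψ (G μ y) ∂μ + ε * ψ (G (μ + ENNReal.ofReal ε • Measure.dirac x) x) := by
    intro ε hε
    have hψ_ae : ∀ᵐ y ∂μ, ψ (G (μ + ENNReal.ofReal ε • Measure.dirac x) y) = ψ (G μ y) := by
      filter_upwards [hball, ae_iff.2 hμ.2.2] with y hyU hy
      rw [hψU (hyU (mem_ball'.2 (hclose hε y hy))), hψU (hyU (mem_ball_self hρ))]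
    rw [integral_map_add_smul_dirac hε.1.le (hmeas _ (hν ε)) hψc hψC, integral_congr_ae hψ_ae]
  refine ⟨ε₀, hε₀, key, ?_⟩
  refine ((hψc.tendsto _).comp (hunif.tendsto_at hx)).congr' ?_
  filter_upwards [Ioo_mem_nhdsGT hε₀] with ε hε
  rw [Function.comp_apply, key ε hε, integral_map (hmeas μ hμ) hψc.aestronglyMeasurable,
    add_sub_cancel_left, mul_div_cancel_left₀ _ hε.1.ne']
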